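/- arXiv:2604.23806 — 4 statements merged into one kernel-verified Lean document; each statement's English description precedes it below -/
import Mathlib

section
/- Let E : ℝᵖ × ℝⁿ → ℝ be C², and for each parameter θ suppose x⋆(θ) is a point with ∇ₓE(θ, x⋆(θ)) = 0 and x⋆ differentiable in θ. Define F(θ) = C(x⋆(θ)) for a C¹ function C : ℝⁿ → ℝ, and for β ∈ ℝ let x⋆^β(θ) be a differentiable family of critical points of x ↦ E(θ,x) + β·C(x) with x⋆^0 = x⋆. Then the EqProp estimator g_β(θ) = (1/β)·[∇_θE(θ, x⋆^β(θ)) − ∇_θE(θ, x⋆^0(θ))] converges to ∇_θ F(θ) as β → 0⁺, provided β ↦ x⋆^β(θ) is C¹ at β = 0. -/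
/-!
Differentiate the equilibrium condition `∂ₓE(θ, x⋆^β(θ)) + β ∇C(x⋆^β(θ)) = 0` at `β = 0`: in `β`
it gives `∂²ₓₓE · ẋ = -∇C` with `ẋ = d/dβ x⋆^β(θ)`, and in `θ` it gives `∂²ₓθE + ∂²ₓₓE · Dx⋆ = 0`.
The `β`-derivative of `∂_θE(θ, x⋆^β(θ))` is the mixed term `∂²_θₓE · ẋ`; by symmetry of the
Hessian of `E` the two relations turn it into `∇C · Dx⋆ = ∇(C ∘ x⋆)`, and the estimator is the
one-sided difference quotient of this derivative.
-/

open Filter Set ContinuousLinearMap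

theorem hasDerivAt_smul_of_continuousAt {F : Type*} [NormedAddCommGroup F] [NormedSpace ℝ F]
    {ψ : ℝ → F} (hψ : ContinuousAt ψ 0) : HasDerivAt (fun β => β • ψ β) (ψ 0) 0 := by
  rw [hasDerivAt_iff_tendsto_slope]
  refine hψ.tendsto.mono_left nhdsWithin_le_nhds |>.congr' ?_
  filter_upwards [self_mem_nhdsWithin] with β (hβ : β ≠ 0)
  simp [slope, hβ, smul_smul]

section

variable {P X F : Type*} [NormedAddCommGroup P] [NormedSpace ℝ P]
  [NormedAddCommGroup X] [NormedSpace ℝ X] [NormedAddCommGroup F] [NormedSpace ℝ F]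

theorem fderiv_comp_prodMk_left {f : P × X → F} {t : P} {x : X}
    (hf : DifferentiableAt ℝ f (t, x)) :
    fderiv ℝ (fun t' => f (t', x)) t = (fderiv ℝ f (t, x)).comp (inl ℝ P X) :=
  (hf.hasFDerivAt.comp t (hasFDerivAt_prodMk_left t x)).fderiv

theorem hasFDerivAt_comp_prodMk_right {f : P × X → F} {t : P} {x : X}
    (hf : DifferentiableAt ℝ f (t, x)) :
    HasFDerivAt (fun x' => f (t, x')) ((fderiv ℝ f (t, x)).comp (inr ℝ P X)) x :=
  hf.hasFDerivAt.comp x (hasFDerivAt_prodMk_right t x)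

/-- `H` is the Hessian of the energy, `x'` the velocity of the nudged
equilibrium and `D` the Jacobian of the free one. -/
theorem comp_inl_eq_of_symmetric {H : P × X →L[ℝ] P × X →L[ℝ] ℝ} (hH : ∀ a b, H a b = H b a)
    {x' : X} {D : P →L[ℝ] X} {ℓ : X →L[ℝ] ℝ}
    (hnudge : (H (0, x')).comp (inr ℝ P X) = -ℓ)
    (hcrit : ∀ v, (H (v, D v)).comp (inr ℝ P X) = 0) :
    (H (0, x')).comp (inl ℝ P X) = ℓ.comp D := by
  ext v
  have h₁ : H (v, D v) (0, x') = 0 := by simpa using congr($(hcrit v) x')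
  have h₂ : H (0, x') (0, D v) = -ℓ (D v) := by simpa using congr($hnudge (D v))
  have hsplit : ((v, D v) : P × X) = (v, 0) + (0, D v) := by simp
  rw [hsplit, map_add, add_apply, hH (v, 0), hH (0, D v), h₂] at h₁
  simp only [comp_apply, inl_apply]
  linarith

theorem hasDerivAt_fderiv_comp_inl_of_nudged_critical {f : P × X → ℝ} {c : X → ℝ}
    {xs : ℝ → P → X} {θ : P} (hf : ContDiffAt ℝ 2 f (θ, xs 0 θ)) (hc : ContDiffAt ℝ 1 c (xs 0 θ))
    (hcrit : ∀ β t, (fderiv ℝ f (t, xs β t)).comp (inr ℝ P X) + β • fderiv ℝ c (xs β t) = 0)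
    (hθ : DifferentiableAt ℝ (xs 0) θ) (hβ : DifferentiableAt ℝ (fun β => xs β θ) 0) :
    HasDerivAt (fun β => (fderiv ℝ f (θ, xs β θ)).comp (inl ℝ P X)) (fderiv ℝ (c ∘ xs 0) θ) 0 := by
  set H := fderiv ℝ (fderiv ℝ f) (θ, xs 0 θ)
  set x' := deriv (fun β => xs β θ) 0
  set D := fderiv ℝ (xs 0) θ
  have hf' : DifferentiableAt ℝ (fderiv ℝ f) (θ, xs 0 θ) :=
    (hf.fderiv_right (m := 1) le_rfl).differentiableAt one_ne_zero
  let compInl : (P × X →L[ℝ] ℝ) →L[ℝ] P →L[ℝ] ℝ := (compL ℝ P (P × X) ℝ).flip (inl ℝ P X)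
  let compInr : (P × X →L[ℝ] ℝ) →L[ℝ] X →L[ℝ] ℝ := (compL ℝ X (P × X) ℝ).flip (inr ℝ P X)
  have hΦβ : HasDerivAt (fun β => fderiv ℝ f (θ, xs β θ)) (H (0, x')) 0 :=
    hf'.hasFDerivAt.comp_hasDerivAt (x := 0) ((hasDerivAt_const 0 θ).prodMk hβ.hasDerivAt)
  have hΦθ : HasFDerivAt (fun t => fderiv ℝ f (t, xs 0 t))
      (H.comp ((ContinuousLinearMap.id ℝ P).prod D)) θ :=
    hf'.hasFDerivAt.comp θ ((hasFDerivAt_id θ).prodMk hθ.hasFDerivAt)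
  have hnudge : (H (0, x')).comp (inr ℝ P X) = -fderiv ℝ c (xs 0 θ) := by
    have h₁ : HasDerivAt (fun β => (fderiv ℝ f (θ, xs β θ)).comp (inr ℝ P X))
        ((H (0, x')).comp (inr ℝ P X)) 0 :=
      compInr.hasFDerivAt.comp_hasDerivAt 0 hΦβ
    have h₂ : HasDerivAt (fun β => -(β • fderiv ℝ c (xs β θ))) (-fderiv ℝ c (xs 0 θ)) 0 :=
      (hasDerivAt_smul_of_continuousAt
        ((hc.continuousAt_fderiv one_ne_zero).comp (f := fun β => xs β θ) hβ.continuousAt)).neg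
    exact h₁.unique (h₂.congr_of_eventuallyEq (.of_forall fun β =>
      eq_neg_of_add_eq_zero_left (hcrit β θ)))
  have hcrit₀ : ∀ v, (H (v, D v)).comp (inr ℝ P X) = 0 := by
    have h₁ : HasFDerivAt (fun t => (fderiv ℝ f (t, xs 0 t)).comp (inr ℝ P X))
        (compInr.comp (H.comp ((ContinuousLinearMap.id ℝ P).prod D))) θ :=
      compInr.hasFDerivAt.comp θ hΦθ
    have h₂ : HasFDerivAt (fun t => (fderiv ℝ f (t, xs 0 t)).comp (inr ℝ P X))
        (0 : P →L[ℝ] X →L[ℝ] ℝ) θ := by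
      have hzero : ∀ t, (fderiv ℝ f (t, xs 0 t)).comp (inr ℝ P X) = 0 := fun t => by
        simpa using hcrit 0 t
      simpa only [hzero] using hasFDerivAt_const (0 : X →L[ℝ] ℝ) θ
    exact fun v => congr($(h₁.unique h₂) v)
  rw [((hc.differentiableAt one_ne_zero).hasFDerivAt.comp θ hθ.hasFDerivAt).fderiv,
    ← comp_inl_eq_of_symmetric (hf.isSymmSndFDerivAt (by simp)) hnudge hcrit₀]
  exact compInl.hasFDerivAt.comp_hasDerivAt 0 hΦβ

end

open InnerProductSpace in
/-- EqProp identity: the one-sided estimator converges to the gradient of the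
loss `F θ = C (x⋆ θ)` as the nudge strength `β → 0⁺`. -/
theorem stmt_0 {p n : ℕ}
    (E : EuclideanSpace ℝ (Fin p) → EuclideanSpace ℝ (Fin n) → ℝ)
    (C : EuclideanSpace ℝ (Fin n) → ℝ)
    (hE : ContDiff ℝ 2 (fun q : EuclideanSpace ℝ (Fin p) × EuclideanSpace ℝ (Fin n) => E q.1 q.2))
    (hC : ContDiff ℝ 1 C)
    (xs : ℝ → EuclideanSpace ℝ (Fin p) → EuclideanSpace ℝ (Fin n))
    (hcrit : ∀ β θ, gradient (fun x => E θ x + β * C x) (xs β θ) = 0)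
    (hdiffθ : ∀ β, Differentiable ℝ (xs β))
    (θ : EuclideanSpace ℝ (Fin p))
    (hdiffβ : ContDiffAt ℝ 1 (fun β => xs β θ) 0) :
    Tendsto
      (fun β : ℝ =>
        β⁻¹ • (gradient (fun t => E t (xs β θ)) θ - gradient (fun t => E t (xs 0 θ)) θ))
      (nhdsWithin 0 (Set.Ioi 0))
      (nhds (gradient (fun t => C (xs 0 t)) θ)) := by
  set f : EuclideanSpace ℝ (Fin p) × EuclideanSpace ℝ (Fin n) → ℝ := fun q => E q.1 q.2
  have hf : Differentiable ℝ f := hE.differentiable two_ne_zero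
  have hcrit_fderiv : ∀ β t,
      (fderiv ℝ f (t, xs β t)).comp (inr ℝ _ _) + β • fderiv ℝ C (xs β t) = 0 := by
    intro β t
    rw [← ((hasFDerivAt_comp_prodMk_right (hf _)).add
      (((hC.differentiable one_ne_zero) _).hasFDerivAt.const_mul β)).fderiv]
    exact (toDual ℝ _).symm.map_eq_zero_iff.mp (hcrit β t)
  have hgrad : ∀ β, gradient (fun t => E t (xs β θ)) θ =
      (toDual ℝ _).symm ((fderiv ℝ f (θ, xs β θ)).comp (inl ℝ _ _)) := fun β => by
    rw [gradient, ← fderiv_comp_prodMk_left (hf _)]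
  have hderiv : HasDerivAt (fun β => gradient (fun t => E t (xs β θ)) θ)
      (gradient (fun t => C (xs 0 t)) θ) 0 := by
    simp only [hgrad]
    exact (toDual ℝ _).symm.toContinuousLinearEquiv.hasFDerivAt.comp_hasDerivAt 0
      (hasDerivAt_fderiv_comp_inl_of_nudged_critical hE.contDiffAt hC.contDiffAt hcrit_fderiv
        (hdiffθ 0 θ) (hdiffβ.differentiableAt one_ne_zero))
  simpa using hderiv.tendsto_slope_zero_right
end

section
/- Let E : ℝⁿ → ℝ be λ⋆-strongly convex and C³, with third derivative tensor bounded in operator norm by T̄, and let C : ℝⁿ → ℝ be a C² function with ‖∇C‖ ≤ G and bounded second derivative. Let x_β denote the unique minimizer of E + β·C. Then the map β ↦ x_β is differentiable at β = 0 with derivative v = −H⁻¹∇C(x₀), where H = ∇²E(x₀), and ‖x_β − x₀ − β·v‖ ≤ K·β² for some constant K depending only on λ⋆, T̄, G, and the bound on ∇²C. -/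
/-!
Strong convexity makes `∇E` strongly monotone, so the Hessian `H = D(∇E)(x₀)` is coercive and,
by Lax–Milgram, invertible with `‖H u‖ ≥ λ‖u‖`; let `H v = -∇C(x₀)`. Testing the critical-point
equation `∇E(x_β) = -β ∇C(x_β)` against `x_β - x₀` gives `λ‖x_β - x₀‖ ≤ G|β|`. Applying `H` to
`x_β - x₀ - β v` leaves the second-order Taylor remainder of `∇E` (at most `T̄‖x_β - x₀‖²`)
and `β (∇C(x_β) - ∇C(x₀))` (at most `|β| B̄ ‖x_β - x₀‖`), both `O(β²)`.
-/

open Set InnerProductSpace Filter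
open scoped RealInnerProductSpace Gradient

section Gradient

variable {X : Type*} [NormedAddCommGroup X] [InnerProductSpace ℝ X]

lemma ConvexOn.hasFDerivAt_monotone {f : X → ℝ} (hf : ConvexOn ℝ univ f) {x y : X}
    {f'x f'y : X →L[ℝ] ℝ} (hx : HasFDerivAt f f'x x) (hy : HasFDerivAt f f'y y) :
    f'y (x - y) ≤ f'x (x - y) := by
  have hline : ∀ t : ℝ, HasDerivAt (fun s : ℝ => y + s • (x - y)) (x - y) t := fun t => by
    simpa using ((hasDerivAt_id t).smul_const (x - y)).const_add y
  have hφ : ConvexOn ℝ univ fun s : ℝ => f (y + s • (x - y)) := by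
    simpa [Function.comp_def, AffineMap.lineMap_apply, add_comm] using
      hf.comp_affineMap (AffineMap.lineMap y x : ℝ →ᵃ[ℝ] X)
  have h0 : HasDerivAt (fun s : ℝ => f (y + s • (x - y))) (f'y (x - y)) 0 :=
    (by simpa using hy : HasFDerivAt f f'y (y + (0 : ℝ) • (x - y))).comp_hasDerivAt 0 (hline 0)
  have h1 : HasDerivAt (fun s : ℝ => f (y + s • (x - y))) (f'x (x - y)) 1 :=
    (by simpa using hx : HasFDerivAt f f'x (y + (1 : ℝ) • (x - y))).comp_hasDerivAt 1 (hline 1)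
  exact (hφ.le_slope_of_hasDerivAt (mem_univ _) (mem_univ _) one_pos h0).trans
    (hφ.slope_le_of_hasDerivAt (mem_univ _) (mem_univ _) one_pos h1)

variable [CompleteSpace X]

lemma StrongConvexOn.mul_norm_sub_sq_le_inner_gradient_sub {f : X → ℝ} {m : ℝ}
    (hf : StrongConvexOn univ m f) (hd : Differentiable ℝ f) (x y : X) :
    m * ‖x - y‖ ^ 2 ≤ ⟪∇ f x - ∇ f y, x - y⟫ := by
  have hψ : ∀ z, HasFDerivAt (fun z => f z - m / 2 * ‖z‖ ^ 2)
      (fderiv ℝ f z - (m / 2) • (2 • innerSL ℝ z)) z := fun z =>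
    (hd z).hasFDerivAt.sub ((hasStrictFDerivAt_norm_sq z).hasFDerivAt.const_mul (m / 2))
  have key := (strongConvexOn_iff_convex.mp hf).hasFDerivAt_monotone (hψ x) (hψ y)
  simp only [sub_apply, smul_apply, innerSL_apply_apply, smul_eq_mul, nsmul_eq_mul,
    Nat.cast_ofNat] at key
  have hsq : ‖x - y‖ ^ 2 = ⟪x, x - y⟫ - ⟪y, x - y⟫ := by
    rw [← inner_sub_left, real_inner_self_eq_norm_sq]
  rw [inner_sub_left, inner_gradient_left, inner_gradient_left, hsq]
  linarith

lemma IsMinOn.gradient_add_smul_eq_zero {f g : X → ℝ} {β : ℝ} {x : X}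
    (hf : DifferentiableAt ℝ f x) (hg : DifferentiableAt ℝ g x)
    (hmin : IsMinOn (fun z => f z + β * g z) univ x) : ∇ f x + β • ∇ g x = 0 := by
  have h := (hmin.isLocalMin univ_mem).hasFDerivAt_eq_zero
    (hf.hasFDerivAt.add (hg.hasFDerivAt.const_mul β))
  apply (toDual ℝ X).injective
  simpa [toDual_gradient] using h

lemma norm_iteratedFDeriv_gradient (f : X → ℝ) (k : ℕ) (x : X) :
    ‖iteratedFDeriv ℝ k (∇ f) x‖ = ‖iteratedFDeriv ℝ (k + 1) f x‖ := by
  rw [← norm_iteratedFDeriv_fderiv]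
  exact (toDual ℝ X).symm.norm_iteratedFDeriv_comp_left (fderiv ℝ f) x k

lemma ContDiff.gradient {f : X → ℝ} {k : WithTop ℕ∞} (hf : ContDiff ℝ (k + 1) f) :
    ContDiff ℝ k (∇ f) :=
  (toDual ℝ X).symm.toContinuousLinearEquiv.contDiff.comp (hf.fderiv_right le_rfl)

end Gradient

section Taylor

variable {X Y : Type*} [NormedAddCommGroup X] [NormedSpace ℝ X]
  [NormedAddCommGroup Y] [NormedSpace ℝ Y]

lemma norm_sub_le_of_norm_fderiv_le {g : X → Y} (hg : Differentiable ℝ g) {B : ℝ}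
    (hB : ∀ z, ‖fderiv ℝ g z‖ ≤ B) (x y : X) : ‖g y - g x‖ ≤ B * ‖y - x‖ :=
  convex_univ.norm_image_sub_le_of_norm_fderiv_le (fun z _ => hg z) (fun z _ => hB z)
    (mem_univ x) (mem_univ y)

lemma norm_sub_sub_fderiv_le_of_norm_iteratedFDeriv_two_le {g : X → Y} (hg : ContDiff ℝ 2 g)
    {T : ℝ} (hT : ∀ z, ‖iteratedFDeriv ℝ 2 g z‖ ≤ T) (x y : X) :
    ‖g y - g x - fderiv ℝ g x (y - x)‖ ≤ T * ‖y - x‖ ^ 2 := by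
  have hg' : Differentiable ℝ (fderiv ℝ g) :=
    (hg.fderiv_right (m := 1) (by norm_num)).differentiable one_ne_zero
  have hlip := norm_sub_le_of_norm_fderiv_le hg' (B := T) fun z => by
    rw [← norm_iteratedFDeriv_one (𝕜 := ℝ), norm_iteratedFDeriv_fderiv]
    exact hT z
  have hball : ∀ z ∈ Metric.closedBall x ‖y - x‖, ‖fderiv ℝ g z - fderiv ℝ g x‖ ≤ T * ‖y - x‖ :=
    fun z hz => (hlip x z).trans (by
      have hT0 : 0 ≤ T := (norm_nonneg _).trans (hT x)
      gcongr
      simpa [dist_eq_norm] using hz)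
  have := (convex_closedBall x ‖y - x‖).norm_image_sub_le_of_norm_fderiv_le'
    (fun z _ => hg.differentiable two_ne_zero z) hball
    (Metric.mem_closedBall_self (norm_nonneg _)) (y := y) (by simp [dist_eq_norm])
  calc _ ≤ T * ‖y - x‖ * ‖y - x‖ := this
    _ = T * ‖y - x‖ ^ 2 := by ring

end Taylor

section Coercive

variable {X : Type*} [NormedAddCommGroup X] [InnerProductSpace ℝ X] {H : X →L[ℝ] X} {m : ℝ}

lemma mul_norm_sq_le_inner_apply_of_hasFDerivAt {g : X → X} {x : X}
    (hmono : ∀ y z, m * ‖y - z‖ ^ 2 ≤ ⟪g y - g z, y - z⟫) (hg : HasFDerivAt g H x) (u : X) :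
    m * ‖u‖ ^ 2 ≤ ⟪H u, u⟫ := by
  have hline : HasDerivAt (fun t : ℝ => g (x + t • u)) (H u) 0 := by
    have : HasDerivAt (fun t : ℝ => x + t • u) u 0 := by
      simpa using ((hasDerivAt_id (0 : ℝ)).smul_const u).const_add x
    exact (by simpa using hg : HasFDerivAt g H (x + (0 : ℝ) • u)).comp_hasDerivAt 0 this
  have hslope := (((innerSL ℝ).flip u).continuous.tendsto (H u)).comp
    hline.tendsto_slope_zero_right
  refine ge_of_tendsto hslope (eventually_nhdsWithin_of_forall fun t (ht : 0 < t) => ?_)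
  have h := hmono (x + t • u) x
  simp only [add_sub_cancel_left, norm_smul, inner_smul_right, Real.norm_eq_abs,
    abs_of_pos ht] at h
  simp only [Function.comp_apply, zero_add, zero_smul, add_zero, ContinuousLinearMap.flip_apply,
    innerSL_apply_apply, real_inner_smul_left]
  rw [le_inv_mul_iff₀ ht]
  refine le_of_mul_le_mul_left ?_ ht
  calc t * (t * (m * ‖u‖ ^ 2)) = m * (t * ‖u‖) ^ 2 := by ring
    _ ≤ _ := h

lemma mul_norm_le_norm_apply_of_coercive (hH : ∀ u, m * ‖u‖ ^ 2 ≤ ⟪H u, u⟫) (u : X) :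
    m * ‖u‖ ≤ ‖H u‖ := by
  rcases (norm_nonneg u).eq_or_lt with hu | hu
  · simp [← hu]
  refine le_of_mul_le_mul_right ?_ hu
  calc m * ‖u‖ * ‖u‖ = m * ‖u‖ ^ 2 := by ring
    _ ≤ ⟪H u, u⟫ := hH u
    _ ≤ ‖H u‖ * ‖u‖ := real_inner_le_norm _ _

lemma surjective_of_coercive [CompleteSpace X] (hm : 0 < m)
    (hH : ∀ u, m * ‖u‖ ^ 2 ≤ ⟪H u, u⟫) : Function.Surjective H := by
  have hB : IsCoercive (innerSL ℝ ∘L H) := ⟨m, hm, fun u => by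
    rw [mul_assoc, ← sq]
    exact hH u⟩
  have heq : ∀ u, hB.continuousLinearEquivOfBilin u = H u := fun u =>
    ext_inner_right ℝ fun w => hB.continuousLinearEquivOfBilin_apply u w
  intro w
  obtain ⟨v, hv⟩ := hB.continuousLinearEquivOfBilin.surjective w
  exact ⟨v, (heq v).symm.trans hv⟩

end Coercive

section Perturbation

variable {X : Type*} [NormedAddCommGroup X] [InnerProductSpace ℝ X]
variable {g c : X → X} {H : X →L[ℝ] X} {m T B G β : ℝ} {x₀ x v : X}

lemma mul_norm_sub_le_of_strongMono (hmono : m * ‖x - x₀‖ ^ 2 ≤ ⟪g x - g x₀, x - x₀⟫)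
    (h₀ : g x₀ = 0) (hx : g x = -(β • c x)) (hG : ‖c x‖ ≤ G) :
    m * ‖x - x₀‖ ≤ G * |β| := by
  rcases (norm_nonneg (x - x₀)).eq_or_lt with hu | hu
  · rw [← hu, mul_zero]
    exact mul_nonneg ((norm_nonneg _).trans hG) (abs_nonneg β)
  refine le_of_mul_le_mul_right ?_ hu
  calc m * ‖x - x₀‖ * ‖x - x₀‖ ≤ ⟪g x - g x₀, x - x₀⟫ := by rwa [mul_assoc, ← sq]
    _ = -(β * ⟪c x, x - x₀⟫) := by rw [h₀, hx, sub_zero, inner_neg_left, real_inner_smul_left]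
    _ ≤ |β * ⟪c x, x - x₀⟫| := neg_le_abs _
    _ ≤ |β| * (G * ‖x - x₀‖) := by
      rw [abs_mul]
      gcongr
      exact (abs_real_inner_le_norm _ _).trans (by gcongr)
    _ = G * |β| * ‖x - x₀‖ := by ring

lemma mul_norm_sub_sub_smul_le (hH : ∀ u, m * ‖u‖ ≤ ‖H u‖) (h₀ : g x₀ = 0)
    (hx : g x = -(β • c x)) (hv : H v = -c x₀)
    (hT : ‖g x - g x₀ - H (x - x₀)‖ ≤ T * ‖x - x₀‖ ^ 2)
    (hB : ‖c x - c x₀‖ ≤ B * ‖x - x₀‖) :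
    m * ‖x - x₀ - β • v‖ ≤ T * ‖x - x₀‖ ^ 2 + |β| * (B * ‖x - x₀‖) := by
  have hsplit : H (x - x₀ - β • v) = -(g x - g x₀ - H (x - x₀)) - β • (c x - c x₀) := by
    rw [map_sub, map_smul, hv, hx, h₀]
    module
  calc m * ‖x - x₀ - β • v‖ ≤ ‖H (x - x₀ - β • v)‖ := hH _
    _ ≤ ‖g x - g x₀ - H (x - x₀)‖ + |β| * ‖c x - c x₀‖ := by
      rw [hsplit, ← Real.norm_eq_abs, ← norm_smul, ← norm_neg (g x - g x₀ - H (x - x₀))]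
      exact norm_sub_le _ _
    _ ≤ _ := by gcongr

lemma norm_sub_sub_smul_le_sq (hm : 0 < m) (hT₀ : 0 ≤ T) (hB₀ : 0 ≤ B)
    (hmono : m * ‖x - x₀‖ ^ 2 ≤ ⟪g x - g x₀, x - x₀⟫) (hH : ∀ u, m * ‖u‖ ≤ ‖H u‖)
    (h₀ : g x₀ = 0) (hx : g x = -(β • c x)) (hv : H v = -c x₀) (hG : ‖c x‖ ≤ G)
    (hT : ‖g x - g x₀ - H (x - x₀)‖ ≤ T * ‖x - x₀‖ ^ 2)
    (hB : ‖c x - c x₀‖ ≤ B * ‖x - x₀‖) :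
    ‖x - x₀ - β • v‖ ≤ (B * G / m ^ 2 + T * G ^ 2 / m ^ 3) * β ^ 2 := by
  have hfirst : ‖x - x₀‖ ≤ G * |β| / m := by
    rw [le_div_iff₀ hm, mul_comm]
    exact mul_norm_sub_le_of_strongMono hmono h₀ hx hG
  rw [← mul_le_mul_iff_of_pos_left hm]
  calc m * ‖x - x₀ - β • v‖ ≤ T * ‖x - x₀‖ ^ 2 + |β| * (B * ‖x - x₀‖) :=
        mul_norm_sub_sub_smul_le hH h₀ hx hv hT hB
    _ ≤ T * (G * |β| / m) ^ 2 + |β| * (B * (G * |β| / m)) := by gcongr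
    _ = m * ((B * G / m ^ 2 + T * G ^ 2 / m ^ 3) * β ^ 2) := by
      field_simp
      rw [← sq_abs β]
      ring

end Perturbation

lemma hasDerivAt_of_norm_sub_sub_smul_le_sq {F : Type*} [NormedAddCommGroup F] [NormedSpace ℝ F]
    {f : ℝ → F} {v : F} {K : ℝ} (h : ∀ t, ‖f t - f 0 - t • v‖ ≤ K * t ^ 2) :
    HasDerivAt f v 0 := by
  rw [hasDerivAt_iff_isLittleO]
  simp only [sub_zero]
  refine (Asymptotics.IsBigO.of_bound K (Eventually.of_forall fun t => ?_)).trans_isLittleO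
    (Asymptotics.isLittleO_pow_id one_lt_two)
  simpa [abs_of_nonneg (sq_nonneg t)] using h t

/-- Second-order expansion of the nudged equilibrium: `β ↦ x_β` is
differentiable at `β = 0` with derivative `v = -H⁻¹ ∇C(x₀)` (expressed by
`H v = -∇C(x₀)`) and a quadratic remainder bound with constant depending only
on `λ⋆`, `T̄`, `G`, and the bound on `∇²C`. -/
theorem stmt_2 {n : ℕ}
    (E C : EuclideanSpace ℝ (Fin n) → ℝ)
    (lam : ℝ) (hlam : 0 < lam)
    (hconv : StrongConvexOn Set.univ lam E)
    (hE : ContDiff ℝ 3 E)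
    (Tbar : ℝ) (hT : ∀ x, ‖iteratedFDeriv ℝ 3 E x‖ ≤ Tbar)
    (hC : ContDiff ℝ 2 C)
    (G : ℝ) (hG : ∀ x, ‖gradient C x‖ ≤ G)
    (Bbar : ℝ) (hB : ∀ x, ‖iteratedFDeriv ℝ 2 C x‖ ≤ Bbar)
    (xβ : ℝ → EuclideanSpace ℝ (Fin n))
    (hmin : ∀ β, IsMinOn (fun x => E x + β * C x) Set.univ (xβ β)) :
    ∃ v : EuclideanSpace ℝ (Fin n),
      fderiv ℝ (gradient E) (xβ 0) v = -gradient C (xβ 0) ∧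
      HasDerivAt xβ v 0 ∧
      ∃ K : ℝ → ℝ → ℝ → ℝ → ℝ,
        ∀ β : ℝ, ‖xβ β - xβ 0 - β • v‖ ≤ K lam Tbar G Bbar * β ^ 2 := by
  have hE₁ : Differentiable ℝ E := hE.differentiable (by norm_num)
  have hC₁ : Differentiable ℝ C := hC.differentiable (by norm_num)
  have hgradE : ContDiff ℝ 2 (∇ E) := hE.gradient
  have hgradC : ContDiff ℝ 1 (∇ C) := hC.gradient
  have hmono := hconv.mul_norm_sub_sq_le_inner_gradient_sub hE₁
  have hcrit : ∀ β, ∇ E (xβ β) = -(β • ∇ C (xβ β)) := fun β =>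
    eq_neg_of_add_eq_zero_left ((hmin β).gradient_add_smul_eq_zero (hE₁ _) (hC₁ _))
  have h₀ : ∇ E (xβ 0) = 0 := by simpa using hcrit 0
  have hcoer : ∀ u, lam * ‖u‖ ^ 2 ≤ ⟪fderiv ℝ (∇ E) (xβ 0) u, u⟫ :=
    mul_norm_sq_le_inner_apply_of_hasFDerivAt hmono
      (hgradE.differentiable two_ne_zero _).hasFDerivAt
  obtain ⟨v, hv⟩ := surjective_of_coercive hlam hcoer (-∇ C (xβ 0))
  have hTaylor : ∀ x, ‖∇ E x - ∇ E (xβ 0) - fderiv ℝ (∇ E) (xβ 0) (x - xβ 0)‖ ≤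
      Tbar * ‖x - xβ 0‖ ^ 2 :=
    norm_sub_sub_fderiv_le_of_norm_iteratedFDeriv_two_le hgradE
      (fun z => (norm_iteratedFDeriv_gradient E 2 z).trans_le (hT z)) _
  have hLip : ∀ x, ‖∇ C x - ∇ C (xβ 0)‖ ≤ Bbar * ‖x - xβ 0‖ :=
    norm_sub_le_of_norm_fderiv_le (hgradC.differentiable one_ne_zero) (fun z => by
      rw [← norm_iteratedFDeriv_one (𝕜 := ℝ), norm_iteratedFDeriv_gradient]
      exact hB z) _
  have hbound : ∀ β, ‖xβ β - xβ 0 - β • v‖ ≤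
      (Bbar * G / lam ^ 2 + Tbar * G ^ 2 / lam ^ 3) * β ^ 2 := fun β =>
    norm_sub_sub_smul_le_sq hlam ((norm_nonneg _).trans (hT 0)) ((norm_nonneg _).trans (hB 0))
      (hmono _ _) (mul_norm_le_norm_apply_of_coercive hcoer) h₀ (hcrit β) hv (hG _)
      (hTaylor _) (hLip _)
  exact ⟨v, hv, hasDerivAt_of_norm_sub_sub_smul_le_sq hbound,
    fun l t g b => b * g / l ^ 2 + t * g ^ 2 / l ^ 3, hbound⟩
end

section
/- Under the hypotheses of the second-order expansion of the nudged equilibrium (E strongly convex and C⁴, C a C³ nudge with bounded derivatives, x_β the minimizer of E + β·C), the symmetric EqProp estimator g_β^sym(θ) = (1/(2β))·[∇_θE(θ, x_β) − ∇_θE(θ, x_{−β})] satisfies ‖g_β^sym(θ) − ∇_θ(C ∘ x₀)(θ)‖ ≤ K₂·β² for small β > 0 and some constant K₂, i.e. the symmetric estimator has bias of order β² rather than β. -/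
/-!
Let `V(β, θ) = E(θ, x_β θ) + β C(x_β θ)` be the energy at equilibrium. Since `x_β θ` is a critical
point of `E θ + β C`, the envelope theorem gives `∂_θ V = ∂_θ E(θ, x_β θ)` and `∂_β V = C(x_β θ)`,
so the symmetry of the second derivative of `V` turns the β-derivative of
`φ(β) = ∂_θ E(θ, x_β θ)` into `∂_θ (C ∘ x_β)`. As `E` is `C⁴` and `x` is `C³`, `φ` is `C³`; the odd
part `φ(s) - φ(-s)` has no quadratic Taylor term, so the central difference of `φ` at `0` is
`φ'(0) + O(β²)`.
-/

open Set ContinuousLinearMap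

variable {Θ X G : Type*} [NormedAddCommGroup Θ] [NormedSpace ℝ Θ] [NormedAddCommGroup X]
  [NormedSpace ℝ X] [NormedAddCommGroup G] [NormedSpace ℝ G]

theorem HasFDerivAt.comp_prodMk_of_comp_inr_eq_zero {F : Θ × X → G} {L : Θ × X →L[ℝ] G}
    {g : Θ → X} {g' : Θ →L[ℝ] X} {θ : Θ} (hF : HasFDerivAt F L (θ, g θ))
    (hg : HasFDerivAt g g' θ) (hcrit : L.comp (inr ℝ Θ X) = 0) :
    HasFDerivAt (fun t => F (t, g t)) (L.comp (inl ℝ Θ X)) θ := by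
  have hL : L.comp ((ContinuousLinearMap.id ℝ Θ).prod g') = L.comp (inl ℝ Θ X) := by
    ext v
    have hv : L (0, g' v) = 0 := by simpa using congr($hcrit (g' v))
    simpa [hv] using L.map_add (v, 0) (0, g' v)
  exact hL ▸ hF.comp θ ((hasFDerivAt_id θ).prodMk hg)

theorem ContDiffAt.hasDerivAt_fderiv_comp_inr {V : ℝ × Θ → G} {b : ℝ} {θ : Θ}
    (hV : ContDiffAt ℝ 2 V (b, θ)) :
    HasDerivAt (fun β => (fderiv ℝ V (β, θ)).comp (inr ℝ ℝ Θ))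
      (fderiv ℝ (fun t => fderiv ℝ V (b, t) (1, 0)) θ) b := by
  set D := fderiv ℝ (fderiv ℝ V) (b, θ)
  have hD : HasFDerivAt (fderiv ℝ V) D (b, θ) :=
    ((hV.fderiv_right (m := 1) le_rfl).differentiableAt one_ne_zero).hasFDerivAt
  have hβ : HasDerivAt (fun β => fderiv ℝ V (β, θ)) (D (1, 0)) b :=
    hD.comp_hasDerivAt b ((hasDerivAt_id b).prodMk (hasDerivAt_const b θ))
  have ht : HasFDerivAt (fun t => fderiv ℝ V (b, t) (1, 0))
      ((D.comp (inr ℝ ℝ Θ)).flip (1, 0)) θ := by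
    simpa using (hD.comp θ (hasFDerivAt_prodMk_right b θ)).clm_apply (hasFDerivAt_const (1, 0) θ)
  rw [ht.fderiv]
  convert hβ.clm_comp (hasDerivAt_const b (inr ℝ ℝ Θ)) using 1
  ext v
  simpa using hV.isSymmSndFDerivAt (by simp) (0, v) (1, 0)

section Equilibrium

variable (E : Θ → X → ℝ) (C : X → ℝ) (xs : ℝ → Θ → X)

def totalEnergy (z : (ℝ × Θ) × X) : ℝ := E z.1.2 z.2 + z.1.1 * C z.2

def equilibriumEnergy (q : ℝ × Θ) : ℝ := totalEnergy E C (q, xs q.1 q.2)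

variable {E C xs}

theorem ContDiff.totalEnergy {n : WithTop ℕ∞} (hE : ContDiff ℝ n fun z : Θ × X => E z.1 z.2)
    (hC : ContDiff ℝ n C) : ContDiff ℝ n (totalEnergy E C) :=
  (hE.comp (contDiff_fst.snd.prodMk contDiff_snd)).add
    (contDiff_fst.fst.mul (hC.comp contDiff_snd))

theorem hasFDerivAt_equilibriumEnergy {q : ℝ × Θ}
    (hT : DifferentiableAt ℝ (totalEnergy E C) (q, xs q.1 q.2))
    (hxs : DifferentiableAt ℝ (fun q : ℝ × Θ => xs q.1 q.2) q)
    (hmin : IsLocalMin (fun x => E q.2 x + q.1 * C x) (xs q.1 q.2)) :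
    HasFDerivAt (equilibriumEnergy E C xs)
      ((fderiv ℝ (totalEnergy E C) (q, xs q.1 q.2)).comp (inl ℝ (ℝ × Θ) X)) q :=
  hT.hasFDerivAt.comp_prodMk_of_comp_inr_eq_zero hxs.hasFDerivAt
    (hmin.hasFDerivAt_eq_zero (hT.hasFDerivAt.comp _ (hasFDerivAt_prodMk_right q _)))

theorem fderiv_equilibriumEnergy_comp_inr (hT : Differentiable ℝ (totalEnergy E C))
    (hxs : Differentiable ℝ fun q : ℝ × Θ => xs q.1 q.2)
    (hmin : ∀ β θ, IsMinOn (fun x => E θ x + β * C x) univ (xs β θ)) (β : ℝ) (θ : Θ) :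
    (fderiv ℝ (equilibriumEnergy E C xs) (β, θ)).comp (inr ℝ ℝ Θ)
      = fderiv ℝ (fun t => E t (xs β θ)) θ := by
  have hpartial : HasFDerivAt (fun t => E t (xs β θ) + β * C (xs β θ))
      (((fderiv ℝ (totalEnergy E C) ((β, θ), xs β θ)).comp (inl ℝ (ℝ × Θ) X)).comp
        (inr ℝ ℝ Θ)) θ := by
    have hpath : HasFDerivAt (fun t : Θ => ((β, t), xs β θ))
        ((inl ℝ (ℝ × Θ) X).comp (inr ℝ ℝ Θ)) θ :=
      (hasFDerivAt_prodMk_left (β, θ) (xs β θ)).comp (g := fun q : ℝ × Θ => (q, xs β θ)) θ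
        (hasFDerivAt_prodMk_right β θ)
    exact (hT _).hasFDerivAt.comp θ hpath
  rw [(hasFDerivAt_equilibriumEnergy (hT _) (hxs _)
    ((hmin β θ).isLocalMin Filter.univ_mem)).fderiv, ← hpartial.fderiv]
  exact fderiv_add_const (β * C (xs β θ))

theorem fderiv_equilibriumEnergy_apply_one_zero (hT : Differentiable ℝ (totalEnergy E C))
    (hxs : Differentiable ℝ fun q : ℝ × Θ => xs q.1 q.2)
    (hmin : ∀ β θ, IsMinOn (fun x => E θ x + β * C x) univ (xs β θ)) (β : ℝ) (θ : Θ) :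
    fderiv ℝ (equilibriumEnergy E C xs) (β, θ) (1, 0) = C (xs β θ) := by
  have hpartial : HasDerivAt (fun b => E θ (xs β θ) + b * C (xs β θ))
      ((fderiv ℝ (totalEnergy E C) ((β, θ), xs β θ)).comp (inl ℝ (ℝ × Θ) X) (1, 0)) β := by
    have hpath : HasDerivAt (fun b : ℝ => ((b, θ), xs β θ)) ((1, 0), 0) β :=
      ((hasDerivAt_id β).prodMk (hasDerivAt_const β θ)).prodMk (hasDerivAt_const β _)
    exact (hT _).hasFDerivAt.comp_hasDerivAt β hpath
  rw [(hasFDerivAt_equilibriumEnergy (hT _) (hxs _)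
    ((hmin β θ).isLocalMin Filter.univ_mem)).fderiv]
  exact hpartial.unique (by simpa using (hasDerivAt_id' β).mul_const (C (xs β θ)))

theorem hasDerivAt_fderiv_energy_equilibrium
    (hE : ContDiff ℝ 2 fun z : Θ × X => E z.1 z.2) (hC : ContDiff ℝ 2 C)
    (hxs : ContDiff ℝ 2 fun q : ℝ × Θ => xs q.1 q.2)
    (hmin : ∀ β θ, IsMinOn (fun x => E θ x + β * C x) univ (xs β θ)) (b : ℝ) (θ : Θ) :
    HasDerivAt (fun β => fderiv ℝ (fun t => E t (xs β θ)) θ)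
      (fderiv ℝ (fun t => C (xs b t)) θ) b := by
  have hT := hE.totalEnergy hC
  have hV : ContDiff ℝ 2 (equilibriumEnergy E C xs) := hT.comp (contDiff_id.prodMk hxs)
  have hmixed := hV.contDiffAt.hasDerivAt_fderiv_comp_inr (b := b) (θ := θ)
  have hTd := hT.differentiable two_ne_zero
  have hxsd := hxs.differentiable two_ne_zero
  simpa only [fderiv_equilibriumEnergy_comp_inr hTd hxsd hmin,
    fderiv_equilibriumEnergy_apply_one_zero hTd hxsd hmin] using hmixed

theorem contDiff_fderiv_energy_equilibrium {m n : WithTop ℕ∞}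
    (hE : ContDiff ℝ m fun z : Θ × X => E z.1 z.2) (hxs : ContDiff ℝ n fun q : ℝ × Θ => xs q.1 q.2)
    (hnm : n + 1 ≤ m) (θ : Θ) :
    ContDiff ℝ n fun β => fderiv ℝ (fun t => E t (xs β θ)) θ := by
  have hEswap : ContDiff ℝ m (Function.uncurry fun x t => E t x) :=
    hE.comp (contDiff_snd.prodMk contDiff_fst)
  exact (hEswap.fderiv (g := fun _ : X => θ) contDiff_const hnm).comp
    (hxs.comp (contDiff_id.prodMk contDiff_const))

end Equilibrium

section CentralDifference

variable {V : Type*} [NormedAddCommGroup V] [NormedSpace ℝ V]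

theorem ContDiff.exists_norm_sub_comp_neg_sub_le {Φ : ℝ → V} (hΦ : ContDiff ℝ 3 Φ) :
    ∃ K, ∀ β ∈ Icc (0 : ℝ) 1, ‖Φ β - Φ (-β) - (2 * β) • deriv Φ 0‖ ≤ K * β ^ 3 := by
  have hΦneg : ContDiff ℝ 3 (fun s => Φ (-s)) := hΦ.comp contDiff_neg
  have hψ : ContDiff ℝ 3 (Φ - fun s => Φ (-s)) := hΦ.sub hΦneg
  obtain ⟨K, hK⟩ := exists_taylor_mean_remainder_bound (n := 2) zero_le_one hψ.contDiffOn
  have hcoeff : ∀ k ≤ 2, iteratedDerivWithin k (Φ - fun s => Φ (-s)) (Icc 0 1) 0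
      = (1 - (-1 : ℝ) ^ k) • iteratedDeriv k Φ 0 := by
    intro k hk
    have hk' : (k : WithTop ℕ∞) ≤ 3 := by exact_mod_cast hk.trans (by norm_num)
    rw [iteratedDerivWithin_eq_iteratedDeriv (uniqueDiffOn_Icc zero_lt_one)
        ((hψ.of_le hk').contDiffAt) ⟨le_rfl, zero_le_one⟩,
      iteratedDeriv_sub (hΦ.of_le hk').contDiffAt (hΦneg.of_le hk').contDiffAt,
      iteratedDeriv_comp_neg, neg_zero, sub_smul, one_smul]
  have htaylor (β : ℝ) :
      taylorWithinEval (Φ - fun s => Φ (-s)) 2 (Icc 0 1) 0 β = (2 * β) • deriv Φ 0 := by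
    simp only [taylor_within_apply, Finset.sum_range_succ, Finset.sum_range_zero,
      hcoeff 0 (by norm_num), hcoeff 1 (by norm_num), hcoeff 2 (by norm_num), iteratedDeriv_one]
    norm_num
    module
  refine ⟨K, fun β hβ => ?_⟩
  simpa only [Pi.sub_apply, htaylor, sub_zero] using hK β hβ

theorem ContDiff.exists_norm_centralDiff_sub_deriv_le {Φ : ℝ → V} (hΦ : ContDiff ℝ 3 Φ) :
    ∃ K, ∀ β ∈ Ioc (0 : ℝ) 1, ‖(2 * β)⁻¹ • (Φ β - Φ (-β)) - deriv Φ 0‖ ≤ K * β ^ 2 := by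
  obtain ⟨K, hK⟩ := hΦ.exists_norm_sub_comp_neg_sub_le
  refine ⟨K / 2, fun β hβ => ?_⟩
  have hβ0 : 0 < 2 * β := by linarith [hβ.1]
  have hrw : (2 * β)⁻¹ • (Φ β - Φ (-β)) - deriv Φ 0
      = (2 * β)⁻¹ • (Φ β - Φ (-β) - (2 * β) • deriv Φ 0) := by
    rw [smul_sub _ (Φ β - Φ (-β)), smul_smul, inv_mul_cancel₀ hβ0.ne', one_smul]
  rw [hrw, norm_smul, norm_inv, Real.norm_of_nonneg hβ0.le, inv_mul_le_iff₀ hβ0]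
  calc ‖Φ β - Φ (-β) - (2 * β) • deriv Φ 0‖ ≤ K * β ^ 3 := hK β (Ioc_subset_Icc_self hβ)
    _ = 2 * β * (K / 2 * β ^ 2) := by ring

end CentralDifference

theorem stmt_3_general {p n : ℕ}
    (E : EuclideanSpace ℝ (Fin p) → EuclideanSpace ℝ (Fin n) → ℝ)
    (C : EuclideanSpace ℝ (Fin n) → ℝ)
    (hE : ContDiff ℝ 4 (fun q : EuclideanSpace ℝ (Fin p) × EuclideanSpace ℝ (Fin n) => E q.1 q.2))
    (hC : ContDiff ℝ 3 C)
    (xs : ℝ → EuclideanSpace ℝ (Fin p) → EuclideanSpace ℝ (Fin n))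
    (hmin : ∀ β θ, IsMinOn (fun x => E θ x + β * C x) Set.univ (xs β θ))
    (hsmooth : ContDiff ℝ 3
      (fun q : ℝ × EuclideanSpace ℝ (Fin p) => xs q.1 q.2))
    (θ : EuclideanSpace ℝ (Fin p)) :
    ∃ K₂ βstar : ℝ, 0 < βstar ∧
      ∀ β : ℝ, β ∈ Set.Ioo 0 βstar →
        ‖(2 * β)⁻¹ • (gradient (fun t => E t (xs β θ)) θ
            - gradient (fun t => E t (xs (-β) θ)) θ)
          - gradient (fun t => C (xs 0 t)) θ‖ ≤ K₂ * β ^ 2 := by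
  have hφ := contDiff_fderiv_energy_equilibrium hE hsmooth (by norm_num) θ
  have hφ' := hasDerivAt_fderiv_energy_equilibrium (hE.of_le (by norm_num))
    (hC.of_le (by norm_num)) (hsmooth.of_le (by norm_num)) hmin 0 θ
  obtain ⟨K, hK⟩ := hφ.exists_norm_centralDiff_sub_deriv_le
  refine ⟨K, 1, one_pos, fun β hβ => ?_⟩
  simp only [gradient, ← map_sub, ← map_smul, LinearIsometryEquiv.norm_map, ← hφ'.deriv]
  exact hK β (Ioo_subset_Ioc_self hβ)

/-- Symmetric EqProp has bias of order `β²`: the central-difference estimator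
built from the `±β`-nudged equilibria approximates the true gradient
`∇_θ (C ∘ x₀)` to within `K₂ β²`. -/
theorem stmt_3 {p n : ℕ}
    (E : EuclideanSpace ℝ (Fin p) → EuclideanSpace ℝ (Fin n) → ℝ)
    (C : EuclideanSpace ℝ (Fin n) → ℝ)
    (hE : ContDiff ℝ 4 (fun q : EuclideanSpace ℝ (Fin p) × EuclideanSpace ℝ (Fin n) => E q.1 q.2))
    (hC : ContDiff ℝ 3 C)
    (lam : ℝ) (hlam : 0 < lam)
    (hconv : ∀ θ, StrongConvexOn Set.univ lam (E θ))
    (xs : ℝ → EuclideanSpace ℝ (Fin p) → EuclideanSpace ℝ (Fin n))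
    (hmin : ∀ β θ, IsMinOn (fun x => E θ x + β * C x) Set.univ (xs β θ))
    (hsmooth : ContDiff ℝ 3
      (fun q : ℝ × EuclideanSpace ℝ (Fin p) => xs q.1 q.2))
    (θ : EuclideanSpace ℝ (Fin p)) :
    ∃ K₂ βstar : ℝ, 0 < βstar ∧
      ∀ β : ℝ, β ∈ Set.Ioo 0 βstar →
        ‖(2 * β)⁻¹ • (gradient (fun t => E t (xs β θ)) θ
            - gradient (fun t => E t (xs (-β) θ)) θ)
          - gradient (fun t => C (xs 0 t)) θ‖ ≤ K₂ * β ^ 2 :=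
  stmt_3_general E C hE hC xs hmin hsmooth θ
end

section
/- Let H ⪰ λ⋆ I be symmetric positive definite, C(z) = (1/2)‖z − d‖² a quadratic loss on the output block with projector P (P² = P = Pᵀ), and E_θ quadratic in x with ∇_θ∇ₓE = M constant. Then the one-sided EqProp estimator at any β ∈ (0, λ⋆/‖P‖) for this setup equals g_β = −Mᵀ(H + βP)⁻¹ P (x₀,O-part minus d extended by zero), and ‖g_β − g₀‖ ≤ (β/λ⋆²)·‖M‖·‖b‖·(1 − β/λ⋆)⁻¹, where b = ∇C at the free equilibrium extended by zeros and g₀ = −MᵀH⁻¹b is the exact gradient. -/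
/-!
The nudged equilibrium satisfies `(H + βP)(xβ − x₀) = −β b`, and `H + βP` is bounded below by
`λ − β‖P‖ > 0`, so `xβ − x₀ = −β u`; applying `M†` gives the closed form of the estimator.
For the bias, `H (u − v₀) = −β P u` gives `λ ‖u − v₀‖ ≤ β ‖P‖ (‖v₀‖ + ‖u − v₀‖)` with
`λ ‖v₀‖ ≤ ‖b‖`, which rearranges to the resolvent bound `β ‖P‖ ‖b‖ / (λ (λ − β ‖P‖))`.
Since `b` lies in the range of the orthogonal projection `P`, either `b = 0` or `‖P‖ = 1`.
-/

open ContinuousLinearMap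

theorem mul_norm_le_norm_apply_of_coercive_s16 {E : Type*} [NormedAddCommGroup E]
    [InnerProductSpace ℝ E] {H : E →L[ℝ] E} {lam : ℝ}
    (hcoer : ∀ v, lam * ‖v‖ ^ 2 ≤ inner ℝ v (H v)) (v : E) : lam * ‖v‖ ≤ ‖H v‖ := by
  rcases (norm_nonneg v).eq_or_lt with hv | hv
  · simp [← hv]
  · refine le_of_mul_le_mul_right ?_ hv
    calc lam * ‖v‖ * ‖v‖ = lam * ‖v‖ ^ 2 := by ring
      _ ≤ inner ℝ v (H v) := hcoer v
      _ ≤ ‖v‖ * ‖H v‖ := real_inner_le_norm _ _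
      _ = ‖H v‖ * ‖v‖ := mul_comm _ _

section Perturbation

variable {E : Type*} [NormedAddCommGroup E] [NormedSpace ℝ E]

theorem injective_of_mul_norm_le_norm_apply {A : E →L[ℝ] E} {c : ℝ} (hc : 0 < c)
    (hA : ∀ v, c * ‖v‖ ≤ ‖A v‖) : Function.Injective A := by
  refine (injective_iff_map_eq_zero A).2 fun v hv => norm_eq_zero.1 ?_
  have := hA v
  rw [hv, norm_zero] at this
  exact le_antisymm (nonpos_of_mul_nonpos_right this hc) (norm_nonneg v)

variable {H P : E →L[ℝ] E} {lam β : ℝ}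

theorem mul_norm_le_norm_add_smul_apply (hH : ∀ v, lam * ‖v‖ ≤ ‖H v‖) (hβ : 0 ≤ β) (v : E) :
    (lam - β * ‖P‖) * ‖v‖ ≤ ‖(H + β • P) v‖ :=
  calc (lam - β * ‖P‖) * ‖v‖ ≤ ‖H v‖ - ‖β • P v‖ := by
        rw [norm_smul, Real.norm_of_nonneg hβ]
        nlinarith [hH v, P.le_opNorm v]
    _ ≤ ‖H v + β • P v‖ := norm_sub_le_norm_add _ _
    _ = ‖(H + β • P) v‖ := rfl

theorem sub_eq_neg_smul_of_nudged (hinj : Function.Injective (H + β • P)) {d x₀ xβ u : E}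
    (hnudge : H xβ + β • (P xβ - d) = H x₀) (hu : (H + β • P) u = P x₀ - d) :
    xβ - x₀ = -(β • u) := by
  apply hinj
  rw [map_neg, map_smul, hu]
  simp only [add_apply, smul_apply, map_sub]
  linear_combination (norm := module) hnudge

theorem norm_sub_le_of_add_smul_apply_eq (hH : ∀ v, lam * ‖v‖ ≤ ‖H v‖) (hβ : 0 ≤ β)
    (hβP : β * ‖P‖ < lam) {b u v : E} (hu : (H + β • P) u = b) (hv : H v = b) :
    ‖u - v‖ ≤ (β * ‖P‖ / lam ^ 2) * ‖b‖ * (1 - β * ‖P‖ / lam)⁻¹ := by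
  have hβP0 : 0 ≤ β * ‖P‖ := mul_nonneg hβ (norm_nonneg P)
  have hlam : 0 < lam := hβP0.trans_lt hβP
  have hdiff : H (u - v) = -(β • P u) := by
    rw [map_sub, hv, ← hu]
    simp only [add_apply, smul_apply]
    abel
  have h1 : lam * ‖u - v‖ ≤ β * ‖P‖ * ‖u‖ := by
    calc lam * ‖u - v‖ ≤ ‖H (u - v)‖ := hH _
      _ = β * ‖P u‖ := by rw [hdiff, norm_neg, norm_smul, Real.norm_of_nonneg hβ]
      _ ≤ β * (‖P‖ * ‖u‖) := by gcongr; exact P.le_opNorm u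
      _ = β * ‖P‖ * ‖u‖ := by ring
  have h2 : (lam - β * ‖P‖) * ‖u - v‖ ≤ β * ‖P‖ * ‖v‖ := by
    nlinarith [mul_le_mul_of_nonneg_left (norm_le_norm_sub_add u v) hβP0]
  have h3 : lam * ‖v‖ ≤ ‖b‖ := hv ▸ hH v
  rw [show (β * ‖P‖ / lam ^ 2) * ‖b‖ * (1 - β * ‖P‖ / lam)⁻¹
      = β * ‖P‖ * ‖b‖ / (lam * (lam - β * ‖P‖)) by field_simp,
    le_div_iff₀ (by nlinarith)]
  nlinarith [mul_le_mul_of_nonneg_left h3 hβP0]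

end Perturbation

theorem ContinuousLinearMap.IsStarProjection.norm_eq_one_of_apply_eq_self
    {𝕜 E : Type*} [RCLike 𝕜] [NormedAddCommGroup E] [InnerProductSpace 𝕜 E] [CompleteSpace E]
    {P : E →L[𝕜] E} (hP : IsStarProjection P) {b : E} (hPb : P b = b) (hb : b ≠ 0) :
    ‖P‖ = 1 := by
  refine le_antisymm (hP.norm_le _) (le_of_mul_le_mul_right ?_ (norm_pos_iff.2 hb))
  simpa [hPb] using P.le_opNorm b

theorem stmt_16_general {p n : ℕ}
    (H P : EuclideanSpace ℝ (Fin n) →L[ℝ] EuclideanSpace ℝ (Fin n))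
    (lam : ℝ)
    (hcoer : ∀ v, lam * ‖v‖ ^ 2 ≤ inner ℝ v (H v))
    (hPsa : IsSelfAdjoint P) (hPproj : P.comp P = P)
    (M : EuclideanSpace ℝ (Fin p) →L[ℝ] EuclideanSpace ℝ (Fin n))
    (d : EuclideanSpace ℝ (Fin n)) (hd : P d = d)
    (β : ℝ) (hβ0 : 0 < β) (hβ : β * ‖P‖ < lam)
    (x₀ xβ : EuclideanSpace ℝ (Fin n))
    (hnudge : H xβ + β • (P xβ - d) = H x₀)
    (b : EuclideanSpace ℝ (Fin n)) (hb : b = P x₀ - d)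
    (u v₀ : EuclideanSpace ℝ (Fin n))
    (hu : (H + β • P) u = b) (hv₀ : H v₀ = b) :
    β⁻¹ • ((ContinuousLinearMap.adjoint M) xβ - (ContinuousLinearMap.adjoint M) x₀)
        = -(ContinuousLinearMap.adjoint M) u ∧
    ‖(-(ContinuousLinearMap.adjoint M) u) - (-(ContinuousLinearMap.adjoint M) v₀)‖
        ≤ (β / lam ^ 2) * ‖M‖ * ‖b‖ * (1 - β / lam)⁻¹ := by
  have hH := mul_norm_le_norm_apply_of_coercive_s16 hcoer
  have hinj : Function.Injective (H + β • P) :=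
    injective_of_mul_norm_le_norm_apply (sub_pos.2 hβ) (mul_norm_le_norm_add_smul_apply hH hβ0.le)
  have hstep : xβ - x₀ = -(β • u) := sub_eq_neg_smul_of_nudged hinj hnudge (hu.trans hb)
  refine ⟨?_, ?_⟩
  · rw [← map_sub, hstep, map_neg, map_smul, smul_neg, inv_smul_smul₀ hβ0.ne']
  · calc ‖-adjoint M u - -adjoint M v₀‖ = ‖adjoint M (u - v₀)‖ := by
          rw [map_sub, ← norm_neg]; congr 1; abel
      _ ≤ ‖M‖ * ‖u - v₀‖ := by simpa using (adjoint M).le_opNorm (u - v₀)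
      _ ≤ ‖M‖ * ((β * ‖P‖ / lam ^ 2) * ‖b‖ * (1 - β * ‖P‖ / lam)⁻¹) := by
          gcongr
          exact norm_sub_le_of_add_smul_apply_eq hH hβ0.le hβ hu hv₀
      _ = (β / lam ^ 2) * ‖M‖ * ‖b‖ * (1 - β / lam)⁻¹ := by
          obtain rfl | hb0 := eq_or_ne b 0
          · simp
          have hPb : P b = b := by
            rw [hb, map_sub, hd, ← comp_apply, hPproj]
          rw [IsStarProjection.norm_eq_one_of_apply_eq_self ⟨hPproj, hPsa⟩ hPb hb0]
          ring

/-- Closed-form finite-`β` bias for a quadratic energy with quadratic output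
nudge: the one-sided EqProp estimator is a resolvent expression
`−M† (H + βP)⁻¹ b`, and its deviation from the exact gradient `−M† H⁻¹ b` is
bounded by `(β/λ⋆²) ‖M‖ ‖b‖ (1 − β/λ⋆)⁻¹`. -/
theorem stmt_16 {p n : ℕ}
    (H P : EuclideanSpace ℝ (Fin n) →L[ℝ] EuclideanSpace ℝ (Fin n))
    (hHsa : IsSelfAdjoint H)
    (lam : ℝ) (hlam : 0 < lam)
    (hcoer : ∀ v, lam * ‖v‖ ^ 2 ≤ inner ℝ v (H v))
    (hPsa : IsSelfAdjoint P) (hPproj : P.comp P = P)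
    (M : EuclideanSpace ℝ (Fin p) →L[ℝ] EuclideanSpace ℝ (Fin n))
    (d : EuclideanSpace ℝ (Fin n)) (hd : P d = d)
    (β : ℝ) (hβ0 : 0 < β) (hβ : β * ‖P‖ < lam)
    (x₀ xβ : EuclideanSpace ℝ (Fin n))
    (hnudge : H xβ + β • (P xβ - d) = H x₀)
    (b : EuclideanSpace ℝ (Fin n)) (hb : b = P x₀ - d)
    (u v₀ : EuclideanSpace ℝ (Fin n))
    (hu : (H + β • P) u = b) (hv₀ : H v₀ = b) :
    β⁻¹ • ((ContinuousLinearMap.adjoint M) xβ - (ContinuousLinearMap.adjoint M) x₀)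
        = -(ContinuousLinearMap.adjoint M) u ∧
    ‖(-(ContinuousLinearMap.adjoint M) u) - (-(ContinuousLinearMap.adjoint M) v₀)‖
        ≤ (β / lam ^ 2) * ‖M‖ * ‖b‖ * (1 - β / lam)⁻¹ :=
  stmt_16_general H P lam hcoer hPsa hPproj M d hd β hβ0 hβ x₀ xβ hnudge b hb u v₀ hu hv₀
end
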